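/- For all integers n ≥ 2 and m ≥ 1, ξ_{n,m} ≤ 1 − (m−1)/n^{⌈log_n m⌉}. -/

import Mathlib

open Finset Filter Topology

/-- A code `(v 0, …, v (m-1))` is *uniquely decodable* if any two nonempty sequences of
indices whose corresponding concatenations of code words coincide are equal. -/
def IsUDCode {X : Type*} {m : ℕ} (v : Fin m → List X) : Prop :=
  ∀ s t : List (Fin m), s ≠ [] → t ≠ [] →
    (s.map v).flatten = (t.map v).flatten → s = t

/-- A *prefix code*: an injective sequence of nonempty words where no code word
is a prefix of another. -/
def IsPrefixCode {X : Type*} {m : ℕ} (v : Fin m → List X) : Prop :=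
  Function.Injective v ∧ (∀ i, v i ≠ []) ∧ ∀ i j, i ≠ j → ¬ v i <+: v j

/-- The set of uniquely decodable codes over an `n`-letter alphabet with
length distribution `L`. -/
def UD (n : ℕ) {m : ℕ} (L : Fin m → ℕ) : Set (Fin m → List (Fin n)) :=
  {v | (∀ i, (v i).length = L i) ∧ IsUDCode v}

/-- The set of prefix codes over an `n`-letter alphabet with length distribution `L`. -/
def PR (n : ℕ) {m : ℕ} (L : Fin m → ℕ) : Set (Fin m → List (Fin n)) :=
  {v | (∀ i, (v i).length = L i) ∧ IsPrefixCode v}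

/-- `ρ_{n,L} = |PR_n(L)| / |UD_n(L)|`. -/
noncomputable def rho (n : ℕ) {m : ℕ} (L : Fin m → ℕ) : ℝ :=
  ((PR n L).ncard : ℝ) / ((UD n L).ncard : ℝ)

/-- `ξ_{n,m} = inf_{L ∈ ℒ_{n,m}} ρ_{n,L}`. -/
noncomputable def xi (n m : ℕ) : ℝ :=
  sInf {r : ℝ | ∃ L : Fin m → ℕ, (∀ i, 1 ≤ L i) ∧ (UD n L).Nonempty ∧ r = rho n L}

/-- `ς_{n,m} = (n - (m mod (n-1))) / n^{⌊m/(n-1)⌋ + 1}`. -/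
noncomputable def varsigma (n m : ℕ) : ℝ :=
  ((n : ℝ) - (m % (n - 1) : ℕ)) / (n : ℝ) ^ (m / (n - 1) + 1)

/-- `q_{n,m}`: `1` if `n ≥ m`, and `(m-1)!/(m-1)^{m-1}` if `n < m`. -/
noncomputable def qnm (n m : ℕ) : ℝ :=
  if m ≤ n then 1 else (Nat.factorial (m - 1) : ℝ) / ((m - 1 : ℕ) : ℝ) ^ (m - 1)

/-- `ϖ_{n,m} = ∏_{i=1}^{m-1} (1 - (1 - n^{-i})/(n-1))`. -/
noncomputable def varpi (n m : ℕ) : ℝ :=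
  ∏ i ∈ Finset.Icc 1 (m - 1), (1 - (1 - 1 / (n : ℝ) ^ i) / ((n : ℝ) - 1))

/-- `η_{n,m} = 1 + Σ_{i=1}^{m-1} C(m-1,i)/(n^i - 1)`. -/
noncomputable def eta (n m : ℕ) : ℝ :=
  1 + ∑ i ∈ Finset.Icc 1 (m - 1), ((m - 1).choose i : ℝ) / ((n : ℝ) ^ i - 1)

/-!
Put `K = n ^ k ≥ m` with `k ≥ 1` and `c = m - 1`, and take `c` code words of length `k` and one
of length `(t + 1) k`. Read words of length `k` as letters of a `K`-letter alphabet. A prefix code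
with these lengths consists of `c` distinct letters and a word `u` of `t + 1` letters whose first
letter is new; conversely, `c` distinct letters and any `u` containing a new letter form a uniquely
decodable code, since the length of the leading run of old letters of a concatenation tells
whether it starts with `u`. Counting gives `ρ ≤ (K - c) K ^ t / (K ^ (t + 1) - c ^ (t + 1))`, which
tends to `1 - c / K` as `t → ∞`.
-/

open Function

section Decoding

variable {ι X Y : Type*}

theorem isUDCode_of_injective_flatMap {m : ℕ} {V : Fin m → List X}
    (h : Injective fun s : List (Fin m) => s.flatMap V) : IsUDCode V :=
  fun s t _ _ hst => h (by simpa only [List.flatMap_def] using hst)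

theorem injective_flatMap_of_head_determined {V : ι → List X} (hne : ∀ i, V i ≠ [])
    (hhead : ∀ a b (s t : List ι), V a ++ s.flatMap V = V b ++ t.flatMap V → a = b) :
    Injective fun s : List ι => s.flatMap V := by
  intro s t hst
  induction s generalizing t with
  | nil =>
    cases t with
    | nil => rfl
    | cons b t => exact absurd (List.append_eq_nil_iff.mp hst.symm).1 (hne b)
  | cons a s ih =>
    cases t with
    | nil => exact absurd (List.append_eq_nil_iff.mp hst).1 (hne a)
    | cons b t =>
      simp only [List.flatMap_cons] at hst
      obtain rfl := hhead a b s t hst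
      rw [ih (List.append_cancel_left hst)]

theorem injective_flatMap_of_length_eq {e : Y → List X} {k : ℕ} (hk : 0 < k)
    (hlen : ∀ a, (e a).length = k) (he : Injective e) :
    Injective fun s : List Y => s.flatMap e :=
  injective_flatMap_of_head_determined
    (fun a h => by simp [← List.length_eq_zero_iff, hlen] at h; omega)
    (fun a b _ _ h => he (List.append_inj h (by rw [hlen, hlen])).1)

theorem injective_flatMap_comp {V : ι → List Y} {e : Y → List X}
    (hV : Injective fun s : List ι => s.flatMap V) (he : Injective fun s : List Y => s.flatMap e) :
    Injective fun s : List ι => s.flatMap fun i => (V i).flatMap e := by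
  simpa only [comp_def, List.flatMap_assoc] using he.comp hV

end Decoding

theorem List.takeWhile_append_of_exists_not {α : Type*} {p : α → Bool} {l₁ l₂ : List α}
    (h : ∃ a ∈ l₁, p a = false) : (l₁ ++ l₂).takeWhile p = l₁.takeWhile p := by
  obtain ⟨a, ha, hpa⟩ := h
  rw [List.takeWhile_append, if_neg fun hlen => ?_]
  have := List.takeWhile_eq_self_iff.mp ((List.takeWhile_prefix _).eq_of_length hlen) a ha
  simp_all

section LetterCode

variable {Y : Type*} {c : ℕ} {y : Fin c → Y} {u : List Y}

theorem exists_notMem_range_of_cons {i : Fin c} {l : List Y}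
    (h : ∃ b ∈ y i :: l, b ∉ Set.range y) : ∃ b ∈ l, b ∉ Set.range y := by
  obtain ⟨b, hb, hbr⟩ := h
  rcases List.mem_cons.mp hb with rfl | hb
  · exact absurd ⟨i, rfl⟩ hbr
  · exact ⟨b, hb, hbr⟩

open scoped Classical in
theorem length_takeWhile_le_flatMap_snoc (hu : ∃ b ∈ u, b ∉ Set.range y)
    {s : List (Fin (c + 1))}
    (hs : ∃ b ∈ s.flatMap (Fin.snoc (fun i => [y i]) u), b ∉ Set.range y) :
    (u.takeWhile (· ∈ Set.range y)).length ≤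
      ((s.flatMap (Fin.snoc (fun i => [y i]) u)).takeWhile (· ∈ Set.range y)).length := by
  induction s with
  | nil => simp at hs
  | cons a s ih =>
    cases a using Fin.lastCases with
    | last =>
      obtain ⟨b, hb, hbr⟩ := hu
      rw [List.flatMap_cons, Fin.snoc_last, List.takeWhile_append_of_exists_not
        (p := fun x => x ∈ Set.range y) ⟨b, hb, by simpa using hbr⟩]
    | cast i =>
      simp only [List.flatMap_cons, Fin.snoc_castSucc, List.singleton_append] at hs ⊢
      simpa using (ih (exists_notMem_range_of_cons hs)).trans (Nat.le_succ _)

theorem cons_flatMap_snoc_ne_append (hu : ∃ b ∈ u, b ∉ Set.range y) (i : Fin c)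
    (s : List (Fin (c + 1))) (r : List Y) :
    y i :: s.flatMap (Fin.snoc (fun i => [y i]) u) ≠ u ++ r := by
  classical
  intro h
  obtain ⟨b, hb, hbr⟩ := hu
  have h_le := length_takeWhile_le_flatMap_snoc ⟨b, hb, hbr⟩
    (exists_notMem_range_of_cons ⟨b, h ▸ List.mem_append_left r hb, hbr⟩)
  -- the run of code letters at the start of both sides would have two different lengths
  have h_len := congrArg (fun l => (l.takeWhile (· ∈ Set.range y)).length) h
  simp only [List.takeWhile_cons_of_pos (p := fun x => x ∈ Set.range y) (a := y i) (by simp),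
    List.length_cons, List.takeWhile_append_of_exists_not (p := fun x => x ∈ Set.range y)
    ⟨b, hb, by simpa using hbr⟩] at h_len
  omega

theorem injective_flatMap_snoc_singletons (hy : Injective y) (hu : ∃ b ∈ u, b ∉ Set.range y) :
    Injective fun s : List (Fin (c + 1)) => s.flatMap (Fin.snoc (fun i => [y i]) u) := by
  refine injective_flatMap_of_head_determined (fun a => ?_) (fun a b s t h => ?_)
  · cases a using Fin.lastCases with
    | last => obtain ⟨b, hb, -⟩ := hu; simpa using List.ne_nil_of_mem hb
    | cast i => simp
  · cases a using Fin.lastCases <;> cases b using Fin.lastCases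
    · rfl
    · simp only [Fin.snoc_castSucc, Fin.snoc_last, List.singleton_append] at h
      exact absurd h.symm (cons_flatMap_snoc_ne_append hu _ _ _)
    · simp only [Fin.snoc_castSucc, Fin.snoc_last, List.singleton_append] at h
      exact absurd h (cons_flatMap_snoc_ne_append hu _ _ _)
    · simp only [Fin.snoc_castSucc, List.singleton_append, List.cons.injEq] at h
      rw [hy h.1]

end LetterCode

section Counting

variable {Y : Type*} [Fintype Y] {c : ℕ} {w : Fin c → Y}

open scoped Classical in
theorem card_filter_forall_mem_range (hw : Injective w) (t : ℕ) :
    #{u : Fin t → Y | ∀ j, u j ∈ Set.range w} = c ^ t := by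
  have : ({u : Fin t → Y | ∀ j, u j ∈ Set.range w} : Finset _) =
      Fintype.piFinset fun _ => univ.image w := by
    ext u; simp [Fintype.mem_piFinset]
  rw [this, Fintype.card_piFinset, prod_const, card_image_of_injective _ hw, card_univ,
    Fintype.card_fin, card_univ, Fintype.card_fin]

open scoped Classical in
theorem card_filter_exists_notMem_range (hw : Injective w) (t : ℕ) :
    #{u : Fin t → Y | ∃ j, u j ∉ Set.range w} = Fintype.card Y ^ t - c ^ t := by
  have := card_filter_add_card_filter_not (s := univ) fun u : Fin t → Y => ∀ j, u j ∈ Set.range w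
  simp only [not_forall] at this
  rw [card_filter_forall_mem_range hw, card_univ, Fintype.card_fun, Fintype.card_fin] at this
  omega

open scoped Classical in
theorem card_filter_apply_zero_notMem_range (hw : Injective w) (t : ℕ) :
    #{u : Fin (t + 1) → Y | u 0 ∉ Set.range w} = (Fintype.card Y - c) * Fintype.card Y ^ t := by
  have : ({u : Fin (t + 1) → Y | u 0 ∉ Set.range w} : Finset _) =
      Fintype.piFinset fun j : Fin (t + 1) => if j = 0 then (univ.image w)ᶜ else univ := by
    ext u
    simp only [mem_filter, mem_univ, true_and, Fintype.mem_piFinset]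
    constructor
    · intro h j
      split_ifs with hj
      · subst hj; simpa using h
      · exact mem_univ _
    · intro h
      simpa using h 0
  rw [this, Fintype.card_piFinset, Fin.prod_univ_succ]
  simp [Fin.succ_ne_zero, card_compl, card_image_of_injective _ hw]

end Counting

theorem UD_finite (n : ℕ) {m : ℕ} (L : Fin m → ℕ) : (UD n L).Finite :=
  (Set.Finite.pi fun i => List.finite_length_eq (Fin n) (L i)).subset
    fun _ hv i _ => hv.1 i

section BlockCode

variable {n k c t : ℕ}

def blockWord (u : Fin t → Fin k → Fin n) : List (Fin n) :=
  (List.ofFn u).flatMap List.ofFn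

def blockCode (w : Fin c → Fin k → Fin n) (u : Fin t → Fin k → Fin n) :
    Fin (c + 1) → List (Fin n) :=
  Fin.snoc (fun i => List.ofFn (w i)) (blockWord u)

def blockLengths (c k t : ℕ) : Fin (c + 1) → ℕ :=
  Fin.snoc (fun _ => k) (t * k)

theorem length_blockWord (u : Fin t → Fin k → Fin n) : (blockWord u).length = t * k := by
  simp [blockWord, List.length_flatMap, List.sum_ofFn, mul_comm]

theorem exists_ofFn_eq {α : Type*} {N : ℕ} {l : List α} (hl : l.length = N) :
    ∃ f : Fin N → α, List.ofFn f = l := by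
  subst hl; exact ⟨l.get, List.ofFn_get l⟩

theorem exists_blockWord_eq {l : List (Fin n)} (hl : l.length = t * k) :
    ∃ u : Fin t → Fin k → Fin n, blockWord u = l := by
  obtain ⟨f, rfl⟩ := exists_ofFn_eq hl
  refine ⟨fun i j => f ⟨i * k + j, ?_⟩, ?_⟩
  · nlinarith [i.2, j.2]
  · rw [List.ofFn_mul, blockWord, List.flatMap_def, List.map_ofFn]
    rfl

theorem blockWord_injective (hk : 0 < k) :
    Injective (blockWord : (Fin t → Fin k → Fin n) → List (Fin n)) :=
  (injective_flatMap_of_length_eq hk (fun _ => List.length_ofFn) List.ofFn_injective).comp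
    List.ofFn_injective

theorem blockCode_injective (hk : 0 < k) :
    Injective fun p : (_ : Fin c → Fin k → Fin n) × (Fin t → Fin k → Fin n) =>
      blockCode p.1 p.2 := by
  rintro ⟨w, u⟩ ⟨w', u'⟩ h
  have hw : w = w' := funext fun i => List.ofFn_injective <| by
    simpa [blockCode] using congrFun h i.castSucc
  have hu : u = u' := blockWord_injective hk <| by
    simpa [blockCode] using congrFun h (Fin.last c)
  subst hw hu
  rfl

theorem blockCode_mem_UD (hk : 0 < k) {w : Fin c → Fin k → Fin n} (hw : Injective w)
    {u : Fin t → Fin k → Fin n} (hu : ∃ j, u j ∉ Set.range w) :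
    blockCode w u ∈ UD n (blockLengths c k t) := by
  refine ⟨fun i => ?_, isUDCode_of_injective_flatMap ?_⟩
  · cases i using Fin.lastCases <;> simp [blockCode, blockLengths, length_blockWord]
  · have hcode : blockCode w u = fun i =>
        (Fin.snoc (α := fun _ => List (Fin k → Fin n)) (fun i => [w i]) (List.ofFn u) i).flatMap
          List.ofFn := by
      funext i
      cases i using Fin.lastCases <;> simp [blockCode, blockWord]
    obtain ⟨j, hj⟩ := hu
    rw [hcode]
    exact injective_flatMap_comp (injective_flatMap_snoc_singletons hw ⟨u j, by simp, hj⟩)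
      (injective_flatMap_of_length_eq hk (fun _ => List.length_ofFn) List.ofFn_injective)

theorem exists_blockCode_eq_of_mem_PR {v : Fin (c + 1) → List (Fin n)}
    (hv : v ∈ PR n (blockLengths c k (t + 1))) :
    ∃ (w : Fin c → Fin k → Fin n) (u : Fin (t + 1) → Fin k → Fin n),
      Injective w ∧ u 0 ∉ Set.range w ∧ blockCode w u = v := by
  obtain ⟨hlen, hinj, -, hprefix⟩ := hv
  choose w hw using fun i : Fin c =>
    exists_ofFn_eq (by simpa [blockLengths] using hlen i.castSucc)
  obtain ⟨u, hu⟩ := exists_blockWord_eq (by simpa [blockLengths] using hlen (Fin.last c))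
  refine ⟨w, u, fun i j hij => Fin.castSucc_injective _ (hinj ?_), ?_, ?_⟩
  · rw [← hw, ← hw, hij]
  · rintro ⟨i, hi⟩
    refine hprefix i.castSucc (Fin.last c) (Fin.castSucc_lt_last i).ne ?_
    rw [← hw, ← hu, hi, blockWord, List.ofFn_succ, List.flatMap_cons]
    exact List.prefix_append _ _
  · funext i
    cases i using Fin.lastCases <;> simp [blockCode, hw, hu]

end BlockCode

section BlockCount

variable {n k c : ℕ}

open scoped Classical in
theorem ncard_PR_blockLengths_le (hk : 0 < k) (t : ℕ) :
    (PR n (blockLengths c k (t + 1))).ncard ≤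
      #{w : Fin c → Fin k → Fin n | Injective w} * ((n ^ k - c) * (n ^ k) ^ t) := by
  calc (PR n (blockLengths c k (t + 1))).ncard
      ≤ ((fun p : (_ : Fin c → Fin k → Fin n) × (Fin (t + 1) → Fin k → Fin n) =>
          blockCode p.1 p.2) '' ↑(({w : Fin c → Fin k → Fin n | Injective w} : Finset _).sigma
          fun w => ({u : Fin (t + 1) → Fin k → Fin n | u 0 ∉ Set.range w} : Finset _))).ncard := by
        refine Set.ncard_le_ncard ?_ (Set.toFinite _)
        intro v hv
        obtain ⟨w, u, hw, hu, rfl⟩ := exists_blockCode_eq_of_mem_PR hv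
        refine ⟨⟨w, u⟩, ?_, rfl⟩
        simp only [coe_sigma, Set.mem_sigma_iff, coe_filter, mem_univ, true_and]
        exact ⟨hw, hu⟩
    _ = _ := by
        rw [Set.ncard_image_of_injective _ (blockCode_injective hk), Set.ncard_coe_finset,
          card_sigma, sum_congr rfl fun w hw => ?_, sum_const, smul_eq_mul]
        convert card_filter_apply_zero_notMem_range (mem_filter.mp hw).2 t <;> simp

open scoped Classical in
theorem le_ncard_UD_blockLengths (hk : 0 < k) (t : ℕ) :
    #{w : Fin c → Fin k → Fin n | Injective w} * ((n ^ k) ^ t - c ^ t) ≤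
      (UD n (blockLengths c k t)).ncard := by
  calc #{w : Fin c → Fin k → Fin n | Injective w} * ((n ^ k) ^ t - c ^ t)
      = ((fun p : (_ : Fin c → Fin k → Fin n) × (Fin t → Fin k → Fin n) =>
          blockCode p.1 p.2) '' ↑(({w : Fin c → Fin k → Fin n | Injective w} : Finset _).sigma
          fun w => ({u : Fin t → Fin k → Fin n | ∃ j, u j ∉ Set.range w} : Finset _))).ncard := by
        rw [Set.ncard_image_of_injective _ (blockCode_injective hk), Set.ncard_coe_finset,
          card_sigma, sum_congr rfl fun w hw => ?_, sum_const, smul_eq_mul]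
        convert card_filter_exists_notMem_range (mem_filter.mp hw).2 t
        simp
    _ ≤ _ := by
        refine Set.ncard_le_ncard ?_ (UD_finite _ _)
        rintro _ ⟨⟨w, u⟩, hwu, rfl⟩
        simp only [coe_sigma, Set.mem_sigma_iff, coe_filter, mem_univ, true_and] at hwu
        exact blockCode_mem_UD hk hwu.1 hwu.2

theorem UD_nonempty_and_rho_le (hk : 0 < k) (hc : c < n ^ k) (t : ℕ) :
    (UD n (blockLengths c k (t + 1))).Nonempty ∧
      rho n (blockLengths c k (t + 1)) ≤
        ((n : ℝ) ^ k - c) * ((n : ℝ) ^ k) ^ t / (((n : ℝ) ^ k) ^ (t + 1) - (c : ℝ) ^ (t + 1)) := by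
  classical
  have hPR := ncard_PR_blockLengths_le (n := n) (c := c) hk t
  have hUD := le_ncard_UD_blockLengths (n := n) (c := c) hk (t + 1)
  set N := #{w : Fin c → Fin k → Fin n | Injective w}
  have hN : 0 < N := by
    obtain ⟨w⟩ := Function.Embedding.nonempty_of_card_le (α := Fin c) (β := Fin k → Fin n)
      (by simpa using hc.le)
    exact card_pos.mpr ⟨w, by simpa using w.injective⟩
  have hpow : c ^ (t + 1) < (n ^ k) ^ (t + 1) := Nat.pow_lt_pow_left hc (Nat.succ_ne_zero t)
  have hUD_pos : 0 < N * ((n ^ k) ^ (t + 1) - c ^ (t + 1)) := Nat.mul_pos hN (by omega)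
  refine ⟨Set.nonempty_of_ncard_ne_zero (by omega), ?_⟩
  calc rho n (blockLengths c k (t + 1))
      ≤ ((N * ((n ^ k - c) * (n ^ k) ^ t) : ℕ) : ℝ) /
          ((N * ((n ^ k) ^ (t + 1) - c ^ (t + 1)) : ℕ) : ℝ) :=
        div_le_div₀ (Nat.cast_nonneg _) (by exact_mod_cast hPR)
          (by exact_mod_cast hUD_pos) (by exact_mod_cast hUD)
    _ = _ := by
        push_cast [Nat.cast_sub hc.le, Nat.cast_sub hpow.le]
        exact mul_div_mul_left _ _ (Nat.cast_pos.mpr hN).ne'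

end BlockCount

theorem tendsto_mul_pow_div_pow_sub_pow {K c : ℝ} (hc : 0 ≤ c) (hcK : c < K) :
    Tendsto (fun t : ℕ => (K - c) * K ^ t / (K ^ (t + 1) - c ^ (t + 1))) atTop
      (𝓝 (1 - c / K)) := by
  have hK : 0 < K := hc.trans_lt hcK
  have hq : c / K < 1 := (div_lt_one hK).mpr hcK
  have h_eq (t : ℕ) : (K - c) * K ^ t / (K ^ (t + 1) - c ^ (t + 1)) =
      (1 - c / K) / (1 - (c / K) ^ (t + 1)) := by
    rw [one_sub_div hK.ne', div_pow, one_sub_div (pow_ne_zero _ hK.ne'), div_div_div_eq, pow_succ,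
      mul_comm K, ← mul_assoc, mul_div_mul_right _ _ hK.ne']
  have h_lim : Tendsto (fun t : ℕ => 1 - (c / K) ^ (t + 1)) atTop (𝓝 1) := by
    simpa using tendsto_const_nhds.sub
      ((tendsto_pow_atTop_nhds_zero_of_lt_one (div_nonneg hc hK.le) hq).comp
        (tendsto_add_atTop_nat 1))
  have := tendsto_const_nhds.div h_lim one_ne_zero (a := 1 - c / K)
  rw [div_one] at this
  exact this.congr fun t => (h_eq t).symm

theorem xi_succ_le {n c k : ℕ} (hk : 0 < k) (hc : c < n ^ k) :
    xi n (c + 1) ≤ 1 - c / (n : ℝ) ^ k := by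
  have h_bdd : BddBelow {r : ℝ | ∃ L : Fin (c + 1) → ℕ,
      (∀ i, 1 ≤ L i) ∧ (UD n L).Nonempty ∧ r = rho n L} :=
    ⟨0, by rintro _ ⟨L, -, -, rfl⟩; exact div_nonneg (Nat.cast_nonneg _) (Nat.cast_nonneg _)⟩
  have h_le (t : ℕ) : xi n (c + 1) ≤
      ((n : ℝ) ^ k - c) * ((n : ℝ) ^ k) ^ t / (((n : ℝ) ^ k) ^ (t + 1) - (c : ℝ) ^ (t + 1)) := by
    obtain ⟨h_ne, h_rho⟩ := UD_nonempty_and_rho_le hk hc t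
    have h_pos : ∀ i, 1 ≤ blockLengths c k (t + 1) i := fun i => by
      cases i using Fin.lastCases <;> simp [blockLengths, Nat.one_le_iff_ne_zero, hk.ne']
    exact (csInf_le h_bdd ⟨_, h_pos, h_ne, rfl⟩).trans h_rho
  exact ge_of_tendsto' (tendsto_mul_pow_div_pow_sub_pow (K := (n : ℝ) ^ k) (Nat.cast_nonneg c)
    (by exact_mod_cast hc)) h_le

/-- Theorem 4: `ξ_{n,m} ≤ 1 - (m-1)/n^{⌈log_n m⌉}`, where `⌈log_n m⌉ = Nat.clog n m`
is the least `k` with `n^k ≥ m`. -/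
theorem stmt9 (n m : ℕ) (hn : 2 ≤ n) (hm : 1 ≤ m) :
    xi n m ≤ 1 - ((m : ℝ) - 1) / (n : ℝ) ^ Nat.clog n m := by
  obtain ⟨c, rfl⟩ := Nat.exists_eq_add_of_le' hm
  rcases Nat.eq_zero_or_pos c with rfl | hc
  · simpa using xi_succ_le (n := n) one_pos (pow_pos (by omega) 1)
  · have hk : 0 < Nat.clog n (c + 1) := Nat.clog_pos hn (by omega)
    simpa using xi_succ_le hk (Nat.lt_of_lt_of_le (Nat.lt_succ_self c) (Nat.le_pow_clog hn _))
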